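/- Let n ≥ 2, 0 < κ < 1, P ∈ ℝⁿ with P ≠ 0, and κ|P| < b < |P|. Then: (i) min over x ∈ S^{n−1} of |P − h(x,P,b)x| equals (|P| − b)/(1 − κ); this minimum is attained at x = P/|P| and coincides with the minimum over {x ∈ S^{n−1} : x·P ≥ b}; (ii) max over {x ∈ S^{n−1} : x·P ≥ b} of |P − h(x,P,b)x| equals √(|P|² − b²)/√(1 − κ²). -/

import Mathlib

open scoped RealInnerProductSpace

/-- The discriminant `Δ(t) = (b − κ²t)² − (1 − κ²)(b² − κ²|P|²)` of the quadratic equation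
defining the polar radius of the Cartesian oval `|X| + κ|X − P| = b`. -/
noncomputable def ovalDelta (κ b normP t : ℝ) : ℝ :=
  (b - κ ^ 2 * t) ^ 2 - (1 - κ ^ 2) * (b ^ 2 - κ ^ 2 * normP ^ 2)

/-- The polar radius `h(x,P,b) = ρ₋(x)` of the refracting Cartesian oval (case `κ < 1`). -/
noncomputable def ovalH {n : ℕ} (κ b : ℝ) (P x : EuclideanSpace ℝ (Fin n)) : ℝ :=
  ((b - κ ^ 2 * ⟪x, P⟫) - Real.sqrt (ovalDelta κ b ‖P‖ ⟪x, P⟫)) / (1 - κ ^ 2)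

/-!
Writing `d = |P − h x|` for a unit vector `x`, the oval satisfies `κ d = b − h` with `h ≥ 0`.
The triangle inequality `|P| ≤ h + d` then gives `(1 − κ) d ≥ |P| − b`, with equality at
`x = P/|P|`. Expanding `d² = |P|² − 2h x·P + h²` and eliminating `h` gives
`(1 − κ²) d² = |P|² − b² − 2h (x·P − b)`, which is at most `|P|² − b²` on the cap `x·P ≥ b`,
with equality on its rim `x·P = b`; the rim is nonempty since `n ≥ 2`.
-/

open Module

section InnerProductSpace

variable {E : Type*} [NormedAddCommGroup E] [InnerProductSpace ℝ E]

lemma exists_norm_eq_one_inner_eq_zero (hE : 2 ≤ finrank ℝ E) (P : E) :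
    ∃ e : E, ‖e‖ = 1 ∧ ⟪e, P⟫ = 0 := by
  have : FiniteDimensional ℝ E := finite_of_finrank_pos (by omega)
  have hker : LinearMap.ker (innerₛₗ ℝ P) ≠ ⊥ :=
    LinearMap.ker_ne_bot_of_finrank_lt (by rw [finrank_self]; omega)
  obtain ⟨v, hv, hv0⟩ := Submodule.exists_mem_ne_zero_of_ne_bot hker
  refine ⟨‖v‖⁻¹ • v, norm_smul_inv_norm hv0, ?_⟩
  rw [real_inner_smul_left, real_inner_comm, ← innerₛₗ_apply_apply, LinearMap.mem_ker.1 hv,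
    mul_zero]

lemma exists_norm_eq_one_inner_eq (hE : 2 ≤ finrank ℝ E) {P : E} (hP : P ≠ 0) {b : ℝ}
    (hb : |b| ≤ ‖P‖) : ∃ x : E, ‖x‖ = 1 ∧ ⟪x, P⟫ = b := by
  obtain ⟨e, he, heP⟩ := exists_norm_eq_one_inner_eq_zero hE P
  have hp : 0 < ‖P‖ := norm_pos_iff.2 hP
  set s := √(‖P‖ ^ 2 - b ^ 2)
  have hs : s ^ 2 = ‖P‖ ^ 2 - b ^ 2 := Real.sq_sqrt (by nlinarith [sq_abs b, abs_nonneg b])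
  refine ⟨(b / ‖P‖ ^ 2) • P + (s / ‖P‖) • e, ?_, ?_⟩
  · refine (pow_left_inj₀ (norm_nonneg _) zero_le_one two_ne_zero).1 ?_
    rw [norm_add_sq_real, real_inner_smul_left, real_inner_smul_right, real_inner_comm, heP,
      norm_smul, norm_smul, he, Real.norm_eq_abs, Real.norm_eq_abs, mul_pow, mul_pow, sq_abs,
      sq_abs, div_pow, div_pow, hs]
    field_simp
    ring
  · rw [inner_add_left, real_inner_smul_left, real_inner_smul_left, heP,
      real_inner_self_eq_norm_sq]
    field_simp
    ring

lemma sq_inner_le_sq_norm {x : E} (hx : ‖x‖ = 1) (P : E) : ⟪x, P⟫ ^ 2 ≤ ‖P‖ ^ 2 := by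
  rw [sq_le_sq, abs_norm]
  simpa [hx] using abs_real_inner_le_norm x P

lemma norm_sub_smul_sq {x : E} (hx : ‖x‖ = 1) (P : E) (h : ℝ) :
    ‖P - h • x‖ ^ 2 = ‖P‖ ^ 2 - 2 * h * ⟪x, P⟫ + h ^ 2 := by
  rw [norm_sub_sq_real, real_inner_smul_right, real_inner_comm, norm_smul, hx, mul_one,
    Real.norm_eq_abs, sq_abs]
  ring

variable {P x : E} {κ b h : ℝ}

lemma sub_le_one_sub_mul_norm_sub_smul (hx : ‖x‖ = 1) (hh : 0 ≤ h)
    (hoval : κ * ‖P - h • x‖ = b - h) : ‖P‖ - b ≤ (1 - κ) * ‖P - h • x‖ := by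
  have := norm_le_norm_add_norm_sub' P (h • x)
  rw [norm_smul, hx, mul_one, Real.norm_of_nonneg hh] at this
  linarith

lemma one_sub_sq_mul_norm_sub_smul_sq (hx : ‖x‖ = 1) (hoval : κ * ‖P - h • x‖ = b - h) :
    (1 - κ ^ 2) * ‖P - h • x‖ ^ 2 = ‖P‖ ^ 2 - b ^ 2 - 2 * h * (⟪x, P⟫ - b) := by
  linear_combination norm_sub_smul_sq hx P h - (κ * ‖P - h • x‖ + b - h) * hoval

lemma one_sub_mul_norm_sub_smul_of_inner_eq_norm (hx : ‖x‖ = 1) (hoval : κ * ‖P - h • x‖ = b - h)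
    (hxP : ⟪x, P⟫ = ‖P‖) (hκ : -1 ≤ κ) (hb : b < ‖P‖) : (1 - κ) * ‖P - h • x‖ = ‖P‖ - b := by
  have hfactor : ((1 - κ) * ‖P - h • x‖ - (‖P‖ - b)) * ((1 + κ) * ‖P - h • x‖ + (‖P‖ - b)) = 0 := by
    linear_combination
      one_sub_sq_mul_norm_sub_smul_sq hx hoval - 2 * (‖P‖ - b) * hoval - 2 * h * hxP
  have : 0 < (1 + κ) * ‖P - h • x‖ + (‖P‖ - b) := by nlinarith [norm_nonneg (P - h • x)]
  linarith [(mul_eq_zero.1 hfactor).resolve_right this.ne']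

lemma norm_sub_smul_le_of_le_inner (hx : ‖x‖ = 1) (hoval : κ * ‖P - h • x‖ = b - h) (hh : 0 ≤ h)
    (hκ : κ ^ 2 < 1) (hbx : b ≤ ⟪x, P⟫) :
    ‖P - h • x‖ ≤ √(‖P‖ ^ 2 - b ^ 2) / √(1 - κ ^ 2) := by
  rw [← Real.sqrt_div' _ (by linarith)]
  refine (le_abs_self _).trans (Real.abs_le_sqrt ?_)
  rw [le_div_iff₀ (by linarith), mul_comm, one_sub_sq_mul_norm_sub_smul_sq hx hoval]
  nlinarith

lemma norm_sub_smul_of_inner_eq (hx : ‖x‖ = 1) (hoval : κ * ‖P - h • x‖ = b - h)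
    (hκ : κ ^ 2 < 1) (hbx : ⟪x, P⟫ = b) :
    ‖P - h • x‖ = √(‖P‖ ^ 2 - b ^ 2) / √(1 - κ ^ 2) := by
  rw [← Real.sqrt_div' _ (by linarith), ← Real.sqrt_sq (norm_nonneg (P - h • x))]
  congr 1
  rw [eq_div_iff (by linarith), mul_comm, one_sub_sq_mul_norm_sub_smul_sq hx hoval, hbx]
  ring

end InnerProductSpace

lemma ovalDelta_eq (κ b p t : ℝ) :
    ovalDelta κ b p t = κ ^ 2 * (t - b) ^ 2 + κ ^ 2 * (1 - κ ^ 2) * (p ^ 2 - t ^ 2) := by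
  unfold ovalDelta
  ring

lemma sq_mul_sub_le_ovalDelta {κ b p t : ℝ} (hκ : κ ^ 2 ≤ 1) (ht : t ^ 2 ≤ p ^ 2) :
    (κ ^ 2 * (b - t)) ^ 2 ≤ ovalDelta κ b p t := by
  rw [ovalDelta_eq]
  have h1 : 0 ≤ κ ^ 2 * (1 - κ ^ 2) := mul_nonneg (sq_nonneg κ) (by linarith)
  nlinarith [mul_nonneg h1 (sq_nonneg (t - b)), mul_nonneg h1 (sub_nonneg.2 ht)]

section Oval

variable {n : ℕ} {κ b : ℝ} {P x : EuclideanSpace ℝ (Fin n)}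

lemma ovalH_le (hκ : κ ^ 2 < 1) (hx : ‖x‖ = 1) : ovalH κ b P x ≤ b := by
  have hΔ := sq_mul_sub_le_ovalDelta (b := b) hκ.le (sq_inner_le_sq_norm hx P)
  have hr := (le_abs_self _).trans (Real.abs_le_sqrt hΔ)
  unfold ovalH
  rw [div_le_iff₀ (by linarith)]
  linarith

lemma ovalH_nonneg (hκ0 : 0 ≤ κ) (hκ1 : κ < 1) (hb : κ * ‖P‖ ≤ b) (hx : ‖x‖ = 1) :
    0 ≤ ovalH κ b P x := by
  have hxP : ⟪x, P⟫ ≤ ‖P‖ := (real_inner_le_norm x P).trans_eq (by rw [hx, one_mul])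
  have hc : 0 ≤ b - κ ^ 2 * ⟪x, P⟫ := by nlinarith [mul_nonneg hκ0 (norm_nonneg P)]
  have hbP : (κ * ‖P‖) ^ 2 ≤ b ^ 2 := pow_le_pow_left₀ (by positivity) hb 2
  have hΔ : ovalDelta κ b ‖P‖ ⟪x, P⟫ ≤ (b - κ ^ 2 * ⟪x, P⟫) ^ 2 := by
    unfold ovalDelta
    nlinarith [mul_nonneg (by nlinarith : (0 : ℝ) ≤ 1 - κ ^ 2) (sub_nonneg.2 hbP)]
  unfold ovalH
  exact div_nonneg (sub_nonneg.2 ((Real.sqrt_le_left hc).2 hΔ)) (by nlinarith)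

lemma mul_norm_sub_ovalH_smul (hκ0 : 0 ≤ κ) (hκ1 : κ < 1) (hx : ‖x‖ = 1) :
    κ * ‖P - ovalH κ b P x • x‖ = b - ovalH κ b P x := by
  have hκ : κ ^ 2 < 1 := by nlinarith
  set h := ovalH κ b P x
  set r := √(ovalDelta κ b ‖P‖ ⟪x, P⟫)
  have hr : r ^ 2 = ovalDelta κ b ‖P‖ ⟪x, P⟫ := Real.sq_sqrt
    ((sq_nonneg _).trans (sq_mul_sub_le_ovalDelta (b := b) hκ.le (sq_inner_le_sq_norm hx P)))
  have hh : (1 - κ ^ 2) * h = (b - κ ^ 2 * ⟪x, P⟫) - r := mul_div_cancel₀ _ (by linarith)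
  have hquad : (1 - κ ^ 2) * h ^ 2 - 2 * (b - κ ^ 2 * ⟪x, P⟫) * h + (b ^ 2 - κ ^ 2 * ‖P‖ ^ 2)
      = 0 := by
    refine (mul_eq_zero.1 ?_).resolve_left (by linarith : (1 - κ ^ 2) ≠ 0)
    unfold ovalDelta at hr
    linear_combination ((1 - κ ^ 2) * h - (b - κ ^ 2 * ⟪x, P⟫) - r) * hh + hr
  refine (pow_left_inj₀ (by positivity) (sub_nonneg.2 (ovalH_le hκ hx)) two_ne_zero).1 ?_
  rw [mul_pow, norm_sub_smul_sq hx]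
  linear_combination -hquad

end Oval

/-- Lemma 4.1, second part: extrema of the distance `|P − h(x,P,b)x|` from the focus `P`
to the oval. -/
theorem stmt11 {n : ℕ} (hn : 2 ≤ n) (κ : ℝ) (hκ0 : 0 < κ) (hκ1 : κ < 1)
    (P : EuclideanSpace ℝ (Fin n)) (hP : P ≠ 0) (b : ℝ)
    (hb1 : κ * ‖P‖ < b) (hb2 : b < ‖P‖) :
    -- (i) the minimum over the whole sphere ...
    IsLeast {r : ℝ | ∃ x : EuclideanSpace ℝ (Fin n), ‖x‖ = 1 ∧ ‖P - ovalH κ b P x • x‖ = r}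
      ((‖P‖ - b) / (1 - κ)) ∧
    -- ... is attained at x = P/|P| ...
    ‖P - ovalH κ b P (‖P‖⁻¹ • P) • (‖P‖⁻¹ • P)‖ = (‖P‖ - b) / (1 - κ) ∧
    -- ... and coincides with the minimum over {x : x·P ≥ b}
    IsLeast {r : ℝ | ∃ x : EuclideanSpace ℝ (Fin n), ‖x‖ = 1 ∧ b ≤ ⟪x, P⟫ ∧
        ‖P - ovalH κ b P x • x‖ = r}
      ((‖P‖ - b) / (1 - κ)) ∧
    -- (ii) the maximum over {x : x·P ≥ b}
    IsGreatest {r : ℝ | ∃ x : EuclideanSpace ℝ (Fin n), ‖x‖ = 1 ∧ b ≤ ⟪x, P⟫ ∧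
        ‖P - ovalH κ b P x • x‖ = r}
      (Real.sqrt (‖P‖ ^ 2 - b ^ 2) / Real.sqrt (1 - κ ^ 2)) := by
  have hp : 0 < ‖P‖ := norm_pos_iff.2 hP
  have hκ : κ ^ 2 < 1 := by nlinarith
  have hoval {x} (hx : ‖x‖ = 1) := mul_norm_sub_ovalH_smul (b := b) (P := P) hκ0.le hκ1 hx
  have hnonneg {x} (hx : ‖x‖ = 1) := ovalH_nonneg hκ0.le hκ1 hb1.le hx
  have hlower {x} (hx : ‖x‖ = 1) : (‖P‖ - b) / (1 - κ) ≤ ‖P - ovalH κ b P x • x‖ :=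
    (div_le_iff₀' (by linarith)).2 (sub_le_one_sub_mul_norm_sub_smul hx (hnonneg hx) (hoval hx))
  set x₀ := ‖P‖⁻¹ • P
  have hx₀ : ‖x₀‖ = 1 := norm_smul_inv_norm hP
  have hx₀P : ⟪x₀, P⟫ = ‖P‖ := by
    rw [real_inner_smul_left, real_inner_self_eq_norm_sq]
    field_simp
  have hval₀ : ‖P - ovalH κ b P x₀ • x₀‖ = (‖P‖ - b) / (1 - κ) := by
    rw [eq_div_iff (by linarith), mul_comm]
    exact one_sub_mul_norm_sub_smul_of_inner_eq_norm hx₀ (hoval hx₀) hx₀P (by linarith) hb2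
  obtain ⟨x₁, hx₁, hx₁P⟩ := exists_norm_eq_one_inner_eq (by simpa using hn) hP
    (abs_le.2 ⟨by nlinarith, hb2.le⟩)
  refine ⟨⟨⟨x₀, hx₀, hval₀⟩, ?_⟩, hval₀, ⟨⟨x₀, hx₀, hx₀P ▸ hb2.le, hval₀⟩, ?_⟩,
    ⟨x₁, hx₁, hx₁P.ge, norm_sub_smul_of_inner_eq hx₁ (hoval hx₁) hκ hx₁P⟩, ?_⟩
  · rintro r ⟨x, hx, rfl⟩
    exact hlower hx
  · rintro r ⟨x, hx, -, rfl⟩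
    exact hlower hx
  · rintro r ⟨x, hx, hbx, rfl⟩
    exact norm_sub_smul_le_of_le_inner hx (hoval hx) (hnonneg hx) hκ hbx
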